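/- Let Φ : I → ℝ be a convex function on an interval I of positive real numbers, let T, V be bounded linear invertible operators on a complex Hilbert space H, and let 0 < m < M with [m², M²] contained in the interior of I and m‖Tx‖ ≤ ‖Vx‖ ≤ M‖Tx‖ for all x ∈ H. Then for every subgradient selection φ of Φ, ⊙_Φ(V,T) ≥ Φ((m²+M²)/2)|T|² + φ((m²+M²)/2)(|V|² − ((m²+M²)/2)|T|²) in the operator order. -/

import Mathlib

/-! Since `m² ≤ X ≤ M²`, the spectrum of `X` lies in `[m², M²]`, where the subgradient inequality at
`c = (m² + M²)/2` bounds `Φ` from below by the affine function `t ↦ Φ c + (t - c) φ c`. Monotonicity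
of the functional calculus transfers this bound to `Φ(X)`, and conjugating by `T`, with
`T* X T = |V|²`, gives the claim. -/

variable {H : Type*} [NormedAddCommGroup H] [InnerProductSpace ℂ H] [CompleteSpace H]

/-- `X = |VT⁻¹|² = (T*)⁻¹ V* V T⁻¹`. -/
noncomputable def qX (V T : (H →L[ℂ] H)ˣ) : H →L[ℂ] H :=
  star (↑(T⁻¹) : H →L[ℂ] H) * (star (V : H →L[ℂ] H) * (V : H →L[ℂ] H)) * (↑(T⁻¹) : H →L[ℂ] H)

/-- The quadratic operator perspective `⊙_Φ(V,T) = T* Φ(X) T`. -/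
noncomputable def qPersp (Φ : ℝ → ℝ) (V T : (H →L[ℂ] H)ˣ) : H →L[ℂ] H :=
  star (T : H →L[ℂ] H) * cfc Φ (qX V T) * (T : H →L[ℂ] H)

/-- `|T|² = T*T`. -/
noncomputable def modSq (T : (H →L[ℂ] H)ˣ) : H →L[ℂ] H :=
  star (T : H →L[ℂ] H) * (T : H →L[ℂ] H)

namespace ContinuousLinearMap

variable {E : Type*} [NormedAddCommGroup E] [InnerProductSpace ℂ E]

lemma reApplyInnerSelf_sub (A B : E →L[ℂ] E) (x : E) :
    (A - B).reApplyInnerSelf x = A.reApplyInnerSelf x - B.reApplyInnerSelf x := by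
  simp only [reApplyInnerSelf_apply, sub_apply, inner_sub_left, map_sub]

lemma reApplyInnerSelf_algebraMap (r : ℝ) (x : E) :
    (algebraMap ℝ (E →L[ℂ] E) r).reApplyInnerSelf x = r * ‖x‖ ^ 2 := by
  rw [reApplyInnerSelf_apply, Algebra.algebraMap_eq_smul_one, smul_apply, one_apply_eq_self,
    ← Complex.coe_smul, inner_smul_left, inner_self_eq_norm_sq_to_K]
  simp [← Complex.ofReal_pow]

variable [CompleteSpace E]

lemma reApplyInnerSelf_star_mul_self (W : E →L[ℂ] E) (x : E) :
    (star W * W).reApplyInnerSelf x = ‖W x‖ ^ 2 := by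
  rw [reApplyInnerSelf_apply, mul_apply_eq_comp, star_eq_adjoint, adjoint_inner_left,
    inner_self_eq_norm_sq]

lemma le_of_reApplyInnerSelf_le {A B : E →L[ℂ] E} (hA : IsSelfAdjoint A)
    (hB : IsSelfAdjoint B) (h : ∀ x, A.reApplyInnerSelf x ≤ B.reApplyInnerSelf x) : A ≤ B :=
  (le_def A B).2 <| isPositive_def'.2
    ⟨hB.sub hA, fun x ↦ by rw [reApplyInnerSelf_sub]; linarith [h x]⟩

lemma algebraMap_sq_le_star_mul_self {W : E →L[ℂ] E} {m : ℝ} (hm : 0 ≤ m)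
    (h : ∀ x, m * ‖x‖ ≤ ‖W x‖) : algebraMap ℝ (E →L[ℂ] E) (m ^ 2) ≤ star W * W :=
  le_of_reApplyInnerSelf_le (.algebraMap _ (.all _)) (.star_mul_self W) fun x ↦ by
    rw [reApplyInnerSelf_algebraMap, reApplyInnerSelf_star_mul_self, ← mul_pow]
    exact pow_le_pow_left₀ (by positivity) (h x) 2

lemma star_mul_self_le_algebraMap_sq {W : E →L[ℂ] E} {M : ℝ} (h : ∀ x, ‖W x‖ ≤ M * ‖x‖) :
    star W * W ≤ algebraMap ℝ (E →L[ℂ] E) (M ^ 2) :=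
  le_of_reApplyInnerSelf_le (.star_mul_self W) (.algebraMap _ (.all _)) fun x ↦ by
    rw [reApplyInnerSelf_algebraMap, reApplyInnerSelf_star_mul_self, ← mul_pow]
    exact pow_le_pow_left₀ (norm_nonneg _) (h x) 2

lemma spectrum_star_mul_self_subset_Icc {W : E →L[ℂ] E} {m M : ℝ} (hm : 0 ≤ m)
    (h : ∀ x, m * ‖x‖ ≤ ‖W x‖ ∧ ‖W x‖ ≤ M * ‖x‖) :
    spectrum ℝ (star W * W) ⊆ Set.Icc (m ^ 2) (M ^ 2) := fun t ht ↦
  ⟨(algebraMap_le_iff_le_spectrum (.star_mul_self W)).1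
      (algebraMap_sq_le_star_mul_self hm fun x ↦ (h x).1) t ht,
    (le_algebraMap_iff_spectrum_le (.star_mul_self W)).1
      (star_mul_self_le_algebraMap_sq fun x ↦ (h x).2) t ht⟩

end ContinuousLinearMap

lemma algebraMap_add_smul_sub_le_cfc {A : Type*} [CStarAlgebra A] [PartialOrder A]
    [StarOrderedRing A] {a : A} {f : ℝ → ℝ} {c s : ℝ}
    (hf : ∀ t ∈ spectrum ℝ a, f c + (t - c) * s ≤ f t)
    (hcont : ContinuousOn f (spectrum ℝ a) := by cfc_cont_tac)
    (ha : IsSelfAdjoint a := by cfc_tac) :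
    algebraMap ℝ A (f c) + s • (a - algebraMap ℝ A c) ≤ cfc f a := by
  have haff : cfc (fun t ↦ f c + (t - c) * s) a =
      algebraMap ℝ A (f c) + s • (a - algebraMap ℝ A c) := by
    simp_rw [mul_comm _ s]
    rw [cfc_const_add (f c) (fun t ↦ s * (t - c)) a, cfc_const_mul s (fun t ↦ t - c) a,
      cfc_sub (R := ℝ) (fun t ↦ t) (fun _ ↦ c) a, cfc_id' ℝ a, cfc_const c a]
  rw [← haff]
  exact cfc_mono hf

lemma star_mul_algebraMap_add_smul_sub_mul {A : Type*} [Ring A] [StarRing A] [Algebra ℝ A]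
    (b a : A) (r s c : ℝ) :
    star b * (algebraMap ℝ A r + s • (a - algebraMap ℝ A c)) * b =
      r • (star b * b) + s • (star b * a * b - c • (star b * b)) := by
  simp only [Algebra.algebraMap_eq_smul_one, mul_add, add_mul, mul_sub, sub_mul, mul_smul_comm,
    smul_mul_assoc, mul_one]

lemma qX_eq_star_mul_self (V T : (H →L[ℂ] H)ˣ) :
    qX V T = star ((V : H →L[ℂ] H) * ↑T⁻¹) * ((V : H →L[ℂ] H) * ↑T⁻¹) := by
  simp only [qX, star_mul, mul_assoc]

lemma star_mul_qX_mul (V T : (H →L[ℂ] H)ˣ) :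
    star (T : H →L[ℂ] H) * qX V T * T = modSq V := by
  have hT : (↑T⁻¹ : H →L[ℂ] H) * T = 1 := T.inv_mul
  have hT' : star (T : H →L[ℂ] H) * star ↑T⁻¹ = 1 := by rw [← star_mul, hT, star_one]
  simp only [qX, modSq, ← mul_assoc, hT', one_mul]
  simp only [mul_assoc, hT, mul_one]

lemma spectrum_qX_subset_Icc {V T : (H →L[ℂ] H)ˣ} {m M : ℝ} (hm : 0 ≤ m)
    (hTV : ∀ x : H, m * ‖(T : H →L[ℂ] H) x‖ ≤ ‖(V : H →L[ℂ] H) x‖ ∧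
      ‖(V : H →L[ℂ] H) x‖ ≤ M * ‖(T : H →L[ℂ] H) x‖) :
    spectrum ℝ (qX V T) ⊆ Set.Icc (m ^ 2) (M ^ 2) := by
  rw [qX_eq_star_mul_self]
  refine ContinuousLinearMap.spectrum_star_mul_self_subset_Icc hm fun y ↦ ?_
  have hTT : (T : H →L[ℂ] H) ((↑T⁻¹ : H →L[ℂ] H) y) = y := by
    rw [← mul_apply_eq_comp, T.mul_inv, one_apply_eq_self]
  simpa only [mul_apply_eq_comp, hTT] using hTV ((↑T⁻¹ : H →L[ℂ] H) y)

theorem stmt2_general (I : Set ℝ)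
    (Φ : ℝ → ℝ) (hΦ : ConvexOn ℝ I Φ)
    (T V : (H →L[ℂ] H)ˣ) (m M : ℝ) (hm : 0 < m) (hmM : m < M)
    (hsub : Set.Icc (m ^ 2) (M ^ 2) ⊆ interior I)
    (hTV : ∀ x : H, m * ‖(T : H →L[ℂ] H) x‖ ≤ ‖(V : H →L[ℂ] H) x‖ ∧ ‖(V : H →L[ℂ] H) x‖ ≤ M * ‖(T : H →L[ℂ] H) x‖)
    (φ : ℝ → ℝ) (hφ : ∀ a ∈ interior I, ∀ t ∈ I, Φ a + (t - a) * φ a ≤ Φ t) :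
    Φ ((m ^ 2 + M ^ 2) / 2) • modSq T +
      φ ((m ^ 2 + M ^ 2) / 2) • (modSq V - ((m ^ 2 + M ^ 2) / 2) • modSq T) ≤
        qPersp Φ V T := by
  have hspec := spectrum_qX_subset_Icc hm.le hTV
  have hmM2 : m ^ 2 < M ^ 2 := by gcongr
  have hc : (m ^ 2 + M ^ 2) / 2 ∈ interior I := hsub ⟨by linarith, by linarith⟩
  set c := (m ^ 2 + M ^ 2) / 2
  have hminorant := algebraMap_add_smul_sub_le_cfc
    (fun t ht ↦ hφ c hc t (interior_subset (hsub (hspec ht))))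
    (hΦ.continuousOn_interior.mono (hspec.trans hsub))
    (by rw [qX_eq_star_mul_self]; exact .star_mul_self _)
  calc _ = star (T : H →L[ℂ] H) *
          (algebraMap ℝ _ (Φ c) + φ c • (qX V T - algebraMap ℝ _ c)) * T := by
        rw [star_mul_algebraMap_add_smul_sub_mul, star_mul_qX_mul, modSq]
    _ ≤ qPersp Φ V T := star_left_conjugate_le_conjugate hminorant _

theorem stmt2 (I : Set ℝ) (hIpos : I ⊆ Set.Ioi 0)
    (Φ : ℝ → ℝ) (hΦ : ConvexOn ℝ I Φ)
    (T V : (H →L[ℂ] H)ˣ) (m M : ℝ) (hm : 0 < m) (hmM : m < M)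
    (hsub : Set.Icc (m ^ 2) (M ^ 2) ⊆ interior I)
    (hTV : ∀ x : H, m * ‖(T : H →L[ℂ] H) x‖ ≤ ‖(V : H →L[ℂ] H) x‖ ∧ ‖(V : H →L[ℂ] H) x‖ ≤ M * ‖(T : H →L[ℂ] H) x‖)
    (φ : ℝ → ℝ) (hφ : ∀ a ∈ interior I, ∀ t ∈ I, Φ a + (t - a) * φ a ≤ Φ t) :
    Φ ((m ^ 2 + M ^ 2) / 2) • modSq T +
      φ ((m ^ 2 + M ^ 2) / 2) • (modSq V - ((m ^ 2 + M ^ 2) / 2) • modSq T) ≤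
        qPersp Φ V T :=
  stmt2_general I Φ hΦ T V m M hm hmM hsub hTV φ hφ
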